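/- arXiv:math/0610318 — 3 statements merged into one kernel-verified Lean document; each statement's English description precedes it below -/
import Mathlib

section
/- Let K be an algebraically closed field, n ≥ 4, and let X ⊂ ℙ^{n-2} consist of the n coordinate points together with (1:1:…:1). Then the homogeneous ideal I(X) ⊂ K[x₁,…,x_{n-1}] is generated by its degree-2 part. -/
/-- The `n` points of `ℙ^{n-2}` in general position: the `n − 1` coordinate points together with
`(1 : 1 : ⋯ : 1)`, given by fixed homogeneous coordinate representatives in `K^{n-1}`. -/
noncomputable def generalPositionPoints (K : Type) [Field K] (n : ℕ) (i : Fin n) :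
    Fin (n - 1) → K :=
  if h : (i : ℕ) < n - 1 then Pi.single (⟨(i : ℕ), h⟩ : Fin (n - 1)) 1 else fun _ => 1

/-- The homogeneous vanishing ideal of the set `X` of the `n` points in general position in
`ℙ^{n-2}`: the polynomials vanishing on all scalar multiples of the chosen representatives. -/
noncomputable def vanishingIdeal (K : Type) [Field K] (n : ℕ) :
    Ideal (MvPolynomial (Fin (n - 1)) K) :=
  ⨅ (i : Fin n), ⨅ (c : K),
    RingHom.ker (MvPolynomial.eval (c • generalPositionPoints K n i))

open MvPolynomial Finsupp

section Aux


section Aux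

variable {K : Type} [Field K] {σ : Type} [DecidableEq σ]

lemma deg_add' (u v : σ →₀ ℕ) : (u + v).degree = u.degree + v.degree := by
  simp [Finsupp.degree_eq_weight_one, map_add]

lemma deg_single' (a : σ) (b : ℕ) : (Finsupp.single a b).degree = b := by
  simp [Finsupp.degree_eq_weight_one, Finsupp.weight_apply, Finsupp.sum_single_index]

/-- "mixed" monomial: has two distinct variables -/
def Mixed (s : σ →₀ ℕ) : Prop := ∃ i j, i ≠ j ∧ s i ≠ 0 ∧ s j ≠ 0

section Comb
variable {J : Ideal (MvPolynomial σ K)}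
  (hJ : ∀ i j k l : σ, i ≠ j → k ≠ l → (X i * X j - X k * X l : MvPolynomial σ K) ∈ J)
  (hex : ∀ a b : σ, ∃ c, c ≠ a ∧ c ≠ b)

include hJ in
lemma lA (u : MvPolynomial σ K) {i j k l : σ} (hij : i ≠ j) (hkl : k ≠ l) :
    u * (X i * X j) - u * (X k * X l) ∈ J := by
  have := Ideal.mul_mem_left J u (hJ i j k l hij hkl)
  rwa [mul_sub] at this

include hJ hex in
lemma lF (a b : σ) {i j : σ} (hij : i ≠ j) :
    X a * (X i * X j) - X b * (X i * X j) ∈ J := by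
  obtain ⟨c, hca, hcb⟩ := hex a b
  have h1 : X a * (X i * X j) - X a * (X b * X c) ∈ J :=
    lA hJ _ hij (fun h => hcb h.symm)
  have h2 : X b * (X a * X c) - X b * (X i * X j) ∈ J :=
    lA hJ _ (fun h => hca h.symm) hij
  have heq : X a * (X i * X j) - X b * (X i * X j) =
      (((X a * (X i * X j) - X a * (X b * X c)) : MvPolynomial σ K)) +
      (X b * (X a * X c) - X b * (X i * X j)) := by
    ring
  rw [heq]; exact add_mem h1 h2

include hJ hex in
lemma lG (z : σ) (e : ℕ) (u : σ →₀ ℕ) (hu : u.degree = e) {i j : σ} (hij : i ≠ j) :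
    (monomial u 1 : MvPolynomial σ K) * (X i * X j) - X z ^ e * (X i * X j) ∈ J := by
  induction e generalizing u with
  | zero =>
      rw [Finsupp.degree_eq_zero_iff] at hu
      subst hu
      simp [monomial_zero']
  | succ e ih =>
      have hne : u ≠ 0 := by
        intro h; rw [h, map_zero] at hu; omega
      obtain ⟨a, ha⟩ := Finsupp.ne_iff.mp hne
      rw [Finsupp.zero_apply] at ha
      set u' := u - Finsupp.single a 1 with hu'
      have hdec : u = Finsupp.single a 1 + u' := by
        ext x
        rcases eq_or_ne a x with h | h
        · subst h
          simp only [hu', Finsupp.add_apply, Finsupp.coe_tsub, Pi.sub_apply,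
            Finsupp.single_eq_same]
          omega
        · simp [hu', Finsupp.single_apply, h]
      have hdeg : u'.degree = e := by
        have := deg_add' (Finsupp.single a 1) u'
        rw [← hdec, hu, deg_single'] at this
        omega
      have hmon : (monomial u 1 : MvPolynomial σ K) = X a * monomial u' 1 := by
        rw [hdec, X, monomial_mul, one_mul]
      have h1 := Ideal.mul_mem_left J (X a) (ih u' hdeg)
      have h2 := Ideal.mul_mem_left J (X z ^ e) (lF hJ hex a z hij)
      have heq : (monomial u 1 : MvPolynomial σ K) * (X i * X j) - X z ^ (e + 1) * (X i * X j) =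
          X a * (monomial u' 1 * (X i * X j) - X z ^ e * (X i * X j)) +
          X z ^ e * (X a * (X i * X j) - X z * (X i * X j)) := by
        rw [hmon]; ring
      rw [heq]; exact add_mem h1 h2

include hJ hex in
lemma lHalf (z p q : σ) (hpq : p ≠ q) (s : σ →₀ ℕ) (hs : Mixed s) :
    (monomial s 1 : MvPolynomial σ K) - X z ^ (s.degree - 2) * (X p * X q) ∈ J := by
  obtain ⟨i, j, hij, hi, hj⟩ := hs
  set s' := s - Finsupp.single i 1 - Finsupp.single j 1 with hs'
  have hdec : s = s' + Finsupp.single i 1 + Finsupp.single j 1 := by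
    ext x
    rcases eq_or_ne i x with h | h
    · subst h
      have hjx : j ≠ i := fun h => hij h.symm
      simp [hs', Finsupp.single_apply, hjx]
      omega
    · rcases eq_or_ne j x with h2 | h2
      · subst h2
        simp [hs', Finsupp.single_apply, h]
        omega
      · simp [hs', Finsupp.single_apply, h, h2]
  have hdeg : s'.degree = s.degree - 2 := by
    have h1 : (s' + Finsupp.single i 1 + Finsupp.single j 1).degree
        = s'.degree + 1 + 1 := by
      rw [deg_add', deg_add', deg_single', deg_single']
    rw [← hdec] at h1
    omega
  have hmon : (monomial s 1 : MvPolynomial σ K) = monomial s' 1 * (X i * X j) := by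
    rw [hdec, X, X, monomial_mul, monomial_mul]
    rw [one_mul, one_mul, add_assoc]
  have h1 := lG hJ hex z (s.degree - 2) s' hdeg hij
  have h2 := lA hJ (X z ^ (s.degree - 2) : MvPolynomial σ K) hij hpq
  have heq : (monomial s 1 : MvPolynomial σ K) - X z ^ (s.degree - 2) * (X p * X q) =
      (((monomial s' 1 * (X i * X j) - X z ^ (s.degree - 2) * (X i * X j)) : MvPolynomial σ K)) +
      (X z ^ (s.degree - 2) * (X i * X j) - X z ^ (s.degree - 2) * (X p * X q)) := by
    rw [hmon]; ring
  rw [heq]; exact add_mem h1 h2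

include hJ hex in
lemma lConn (z p q : σ) (hpq : p ≠ q) (s t : σ →₀ ℕ) (hst : s.degree = t.degree)
    (hs : Mixed s) (ht : Mixed t) :
    (monomial s 1 : MvPolynomial σ K) - monomial t 1 ∈ J := by
  have h1 := lHalf hJ hex z p q hpq s hs
  have h2 := lHalf hJ hex z p q hpq t ht
  have := sub_mem h1 h2
  rw [hst] at this
  simpa using this

end Comb

variable {g : MvPolynomial σ K} {d : ℕ}

lemma supp_degree_eq (hg : g.IsHomogeneous d) {s : σ →₀ ℕ} (hs : s ∈ g.support) :
    s.degree = d := by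
  by_contra h
  exact (MvPolynomial.mem_support_iff.mp hs) (hg.coeff_eq_zero h)

lemma evalSmul (hg : g.IsHomogeneous d) (c : K) (x : σ → K) :
    eval (c • x) g = c ^ d * eval x g := by
  rw [eval_eq, eval_eq, Finset.mul_sum]
  apply Finset.sum_congr rfl
  intro s hs
  have hdeg : s.degree = d := supp_degree_eq hg hs
  have : ∏ i ∈ s.support, (c • x) i ^ s i
      = c ^ d * ∏ i ∈ s.support, x i ^ s i := by
    have h1 : ∀ i ∈ s.support, (c • x) i ^ s i = c ^ s i * x i ^ s i := by
      intro i _; simp [mul_pow]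
    rw [Finset.prod_congr rfl h1, Finset.prod_mul_distrib, Finset.prod_pow_eq_pow_sum]
    rw [show ∑ i ∈ s.support, s i = d from hdeg]
  rw [this]; ring

lemma single_of_supp_subset {s : σ →₀ ℕ} {k : σ} (h : ∀ i ∈ s.support, i = k) :
    s = Finsupp.single k (s k) := by
  ext x
  rcases eq_or_ne x k with hx | hx
  · subst hx; simp
  · rw [Finsupp.single_apply, if_neg (fun hh => hx hh.symm)]
    by_contra hz
    exact hx (h x (Finsupp.mem_support_iff.mpr hz))

lemma evalSingle (hg : g.IsHomogeneous d) (k : σ) :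
    eval (Pi.single k (1:K)) g = coeff (Finsupp.single k d) g := by
  rw [eval_eq]
  have step : ∀ s ∈ g.support,
      g.coeff s * ∏ i ∈ s.support, (Pi.single k (1:K)) i ^ s i
      = if s = Finsupp.single k d then g.coeff s else 0 := by
    intro s hs
    have hdeg : s.degree = d := supp_degree_eq hg hs
    by_cases hsupp : ∀ i ∈ s.support, i = k
    · have hsk : s = Finsupp.single k (s k) := single_of_supp_subset hsupp
      have hskd : s k = d := by rw [hsk, deg_single'] at hdeg; exact hdeg
      have hse : s = Finsupp.single k d := by rw [← hskd]; exact hsk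
      rw [if_pos hse]
      have h1 : ∀ i ∈ s.support, ((Pi.single k (1:K) : σ → K)) i ^ s i = (1:K) := by
        intro i hi
        rw [hsupp i hi]
        simp
      rw [Finset.prod_congr rfl h1, Finset.prod_const_one, mul_one]
    · push_neg at hsupp
      obtain ⟨i, hi, hik⟩ := hsupp
      have hz : ((Pi.single k (1:K) : σ → K)) i ^ s i = (0:K) := by
        rw [Pi.single_apply, if_neg hik]
        exact zero_pow (Finsupp.mem_support_iff.mp hi)
      rw [Finset.prod_eq_zero hi hz, mul_zero, if_neg]
      intro h
      apply hik
      have h2 := hi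
      rw [h] at h2
      rw [Finsupp.mem_support_iff, Finsupp.single_apply_ne_zero] at h2
      exact h2.1
  rw [Finset.sum_congr rfl step, Finset.sum_ite_eq' g.support]
  split_ifs with h
  · rfl
  · exact (MvPolynomial.notMem_support_iff.mp h).symm

lemma evalOnes (g : MvPolynomial σ K) :
    eval (fun _ => (1:K)) g = ∑ s ∈ g.support, coeff s g := by
  rw [eval_eq]
  simp

end Aux
section Concrete

variable {K : Type} [Field K] {n : ℕ}

lemma memI {f : MvPolynomial (Fin (n-1)) K} :
    f ∈ vanishingIdeal K n ↔
      ∀ (i : Fin n) (c : K), eval (c • generalPositionPoints K n i) f = 0 := by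
  simp [_root_.vanishingIdeal, Ideal.mem_iInf, RingHom.mem_ker]

lemma genMem {i j k l : Fin (n-1)} (hij : i ≠ j) (hkl : k ≠ l) :
    (X i * X j - X k * X l : MvPolynomial (Fin (n-1)) K) ∈ vanishingIdeal K n := by
  rw [memI]
  intro a c
  rw [map_sub, map_mul, map_mul, eval_X, eval_X, eval_X, eval_X]
  have key : ∀ u v : Fin (n-1), u ≠ v →
      (c • generalPositionPoints K n a) u * (c • generalPositionPoints K n a) v
        = if (a:ℕ) < n - 1 then 0 else c * c := by
    intro u v huv
    simp only [Pi.smul_apply, smul_eq_mul, generalPositionPoints]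
    split_ifs with h
    · rcases eq_or_ne u ⟨(a:ℕ), h⟩ with hu | hu
      · have hv : v ≠ ⟨(a:ℕ), h⟩ := fun hv => huv (hv ▸ hu ▸ rfl)
        rw [Pi.single_eq_of_ne hv]
        ring
      · rw [Pi.single_eq_of_ne hu]
        ring
    · simp
  rw [key i j hij, key k l hkl, sub_self]

lemma genHomog {i j k l : Fin (n-1)} :
    (X i * X j - X k * X l : MvPolynomial (Fin (n-1)) K).IsHomogeneous 2 := by
  have h1 : (X i * X j : MvPolynomial (Fin (n-1)) K).IsHomogeneous 2 := by
    simpa using (isHomogeneous_X K i).mul (isHomogeneous_X K j)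
  have h2 : (X k * X l : MvPolynomial (Fin (n-1)) K).IsHomogeneous 2 := by
    simpa using (isHomogeneous_X K k).mul (isHomogeneous_X K l)
  exact h1.sub h2

lemma componentVanish [IsAlgClosed K] {f : MvPolynomial (Fin (n-1)) K}
    (hf : f ∈ vanishingIdeal K n) (d : ℕ) (i : Fin n) :
    eval (generalPositionPoints K n i) (homogeneousComponent d f) = 0 := by
  set x := generalPositionPoints K n i with hx
  set N := f.totalDegree + 1 with hN
  set a : ℕ → K := fun e => eval x (homogeneousComponent e f) with ha
  have hsum : ∀ c : K, ∑ e ∈ Finset.range N, a e * c ^ e = 0 := by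
    intro c
    have h0 := memI.mp hf i c
    conv_lhs at h0 => rw [← sum_homogeneousComponent f]
    rw [map_sum] at h0
    have : ∀ e ∈ Finset.range N, eval (c • x) (homogeneousComponent e f)
        = a e * c ^ e := by
      intro e _
      rw [evalSmul (homogeneousComponent_isHomogeneous e f) c x]
      ring
    rwa [Finset.sum_congr rfl this] at h0
  set Q : Polynomial K := ∑ e ∈ Finset.range N, Polynomial.C (a e) * Polynomial.X ^ e with hQ
  have hQ0 : Q = 0 := by
    apply Polynomial.funext
    intro c
    rw [Polynomial.eval_zero, hQ, Polynomial.eval_finset_sum]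
    simpa using hsum c
  rcases lt_or_ge d N with hd | hd
  · have : Q.coeff d = a d := by
      rw [hQ, Polynomial.finset_sum_coeff]
      rw [Finset.sum_congr rfl (fun e _ => Polynomial.coeff_C_mul_X_pow (a e) e d)]
      rw [Finset.sum_ite_eq (Finset.range N)]
      rw [if_pos (Finset.mem_range.mpr hd)]
    have h2 : a d = 0 := by rw [← this, hQ0, Polynomial.coeff_zero]
    exact h2
  · rw [homogeneousComponent_eq_zero]
    · simp
    · omega

end Concrete

section Concrete2
variable {K : Type} [Field K] {n : ℕ}

lemma pCoord (k : Fin (n-1)) (h : (k:ℕ) < n) :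
    generalPositionPoints K n ⟨(k:ℕ), h⟩ = Pi.single k 1 := by
  have hk : (k:ℕ) < n - 1 := k.isLt
  simp only [generalPositionPoints]
  rw [dif_pos hk]

lemma pOnes (h : n - 1 < n) :
    generalPositionPoints K n ⟨n-1, h⟩ = fun _ => (1:K) := by
  simp only [generalPositionPoints]
  rw [dif_neg (lt_irrefl _)]

lemma exThird (hn : 4 ≤ n) (a b : Fin (n-1)) : ∃ c, c ≠ a ∧ c ≠ b := by
  have hne : ({a, b}ᶜ : Finset (Fin (n-1))).Nonempty := by
    rw [← Finset.card_pos, Finset.card_compl]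
    have h1 : ({a, b} : Finset (Fin (n-1))).card ≤ 2 :=
      (Finset.card_insert_le _ _).trans (by simp)
    have h2 : Fintype.card (Fin (n-1)) = n - 1 := Fintype.card_fin _
    omega
  obtain ⟨c, hc⟩ := hne
  rw [Finset.mem_compl, Finset.mem_insert, Finset.mem_singleton] at hc
  push_neg at hc
  exact ⟨c, hc.1, hc.2⟩

theorem vanishing_ideal_generated_by_quadrics'
    {K : Type} [Field K] [IsAlgClosed K] (n : ℕ) (hn : 4 ≤ n) :
    vanishingIdeal K n =
      Ideal.span {f | f ∈ vanishingIdeal K n ∧ f.IsHomogeneous 2} := by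
  classical
  apply le_antisymm
  · intro f hf
    rw [← sum_homogeneousComponent f]
    apply Ideal.sum_mem
    intro d _
    set g := homogeneousComponent d f with hgdef
    have hg : g.IsHomogeneous d := homogeneousComponent_isHomogeneous d f
    have hvan : ∀ i : Fin n, eval (generalPositionPoints K n i) g = 0 :=
      fun i => componentVanish hf d i
    have hpure : ∀ k : Fin (n-1), coeff (Finsupp.single k d) g = 0 := by
      intro k
      have hk' : (k:ℕ) < n := by have := k.isLt; omega
      have h1 := hvan ⟨(k:ℕ), hk'⟩
      rw [pCoord k hk', evalSingle hg k] at h1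
      exact h1
    have hsum0 : ∑ s ∈ g.support, coeff s g = 0 := by
      have h1 := hvan ⟨n-1, by omega⟩
      rw [pOnes (by omega), evalOnes] at h1
      exact h1
    have hmixed : ∀ s ∈ g.support, Mixed s := by
      intro s hs
      by_contra hmix
      have hone : ∀ i ∈ s.support, ∀ j ∈ s.support, i = j := by
        intro i hi j hj
        by_contra hij
        exact hmix ⟨i, j, hij,
          Finsupp.mem_support_iff.mp hi, Finsupp.mem_support_iff.mp hj⟩
      have hpos : 0 < n - 1 := by omega
      rcases Finset.eq_empty_or_nonempty s.support with he | ⟨i0, hi0⟩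
      · have hs0 : s = 0 := by rwa [Finsupp.support_eq_empty] at he
        have hd0 : d = 0 := by
          rw [← supp_degree_eq hg hs, hs0, map_zero]
        have h2 := hpure ⟨0, hpos⟩
        rw [hd0, Finsupp.single_zero] at h2
        rw [hs0] at hs
        exact (MvPolynomial.mem_support_iff.mp hs) h2
      · have hsub : ∀ i ∈ s.support, i = i0 := fun i hi => hone i hi i0 hi0
        have hsk := single_of_supp_subset hsub
        have hsi : s i0 = d := by
          have hd := supp_degree_eq hg hs
          rw [hsk, deg_single'] at hd
          exact hd
        have hse : s = Finsupp.single i0 d := by rw [← hsi]; exact hsk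
        exact (MvPolynomial.mem_support_iff.mp hs) (hse ▸ hpure i0)
    by_cases hg0 : g = 0
    · rw [hg0]; exact Submodule.zero_mem _
    · obtain ⟨s1, hs1⟩ := MvPolynomial.support_nonempty.mpr hg0
      have hrepr : g = ∑ s ∈ g.support,
          C (coeff s g) * ((monomial s (1:K)) - monomial s1 1) := by
        have hexp : ∀ s, C (coeff s g) * ((monomial s (1:K)) - monomial s1 1)
            = monomial s (coeff s g) - C (coeff s g) * monomial s1 1 := by
          intro s; rw [mul_sub, C_mul_monomial, mul_one]
        rw [Finset.sum_congr rfl (fun s _ => hexp s), Finset.sum_sub_distrib,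
          support_sum_monomial_coeff, ← Finset.sum_mul, ← map_sum, hsum0,
          map_zero, zero_mul, sub_zero]
      rw [hrepr]
      apply Ideal.sum_mem
      intro s hs
      apply Ideal.mul_mem_left
      have hJgen : ∀ i j k l : Fin (n-1), i ≠ j → k ≠ l →
          (X i * X j - X k * X l : MvPolynomial (Fin (n-1)) K) ∈
            Ideal.span {f | f ∈ vanishingIdeal K n ∧ f.IsHomogeneous 2} :=
        fun i j k l hij hkl => Ideal.subset_span ⟨genMem hij hkl, genHomog⟩
      have hz0 : (0:ℕ) < n - 1 := by omega
      have hz1 : (1:ℕ) < n - 1 := by omega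
      have hz2 : (2:ℕ) < n - 1 := by omega
      have hpq : (⟨1, hz1⟩ : Fin (n-1)) ≠ ⟨2, hz2⟩ := by
        intro h
        have h2 := congrArg Fin.val h
        simp only [] at h2
        omega
      exact lConn hJgen (exThird hn) ⟨0, hz0⟩ ⟨1, hz1⟩ ⟨2, hz2⟩ hpq s s1
        (by rw [supp_degree_eq hg hs, supp_degree_eq hg hs1])
        (hmixed s hs) (hmixed s1 hs1)
  · rw [Ideal.span_le]
    rintro f ⟨hf, -⟩
    exact hf

end Concrete2

/-- Let `K` be an algebraically closed field, `n ≥ 4`, and let `X ⊂ ℙ^{n-2}`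
consist of the `n` coordinate points together with `(1 : 1 : ⋯ : 1)`.  Then the homogeneous
ideal `I(X) ⊂ K[x₁, …, x_{n-1}]` is generated by its degree-2 part. -/
theorem vanishing_ideal_generated_by_quadrics
    {K : Type} [Field K] [IsAlgClosed K] (n : ℕ) (hn : 4 ≤ n) :
    vanishingIdeal K n =
      Ideal.span {f | f ∈ vanishingIdeal K n ∧ f.IsHomogeneous 2} :=
  vanishing_ideal_generated_by_quadrics' n hn
end Aux
end

section
/- Let C ⊂ ℙ³ over an algebraically closed field be a smooth irreducible curve defined by two coprime quadrics q₁, q₂ forming a complete intersection. Then C cannot be the common zero locus of the five 4×4 Pfaffians of a 5×5 alternating matrix φ of linear forms on ℙ³ whose Pfaffians span the space ⟨q₁, q₂⟩. -/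
/-- The Pfaffian of a `4 × 4` alternating matrix, determined by its upper-triangular entries. -/
def pfaffian4 {R : Type} [CommRing R] (N : Matrix (Fin 4) (Fin 4) R) : R :=
  N 0 1 * N 2 3 - N 0 2 * N 1 3 + N 0 3 * N 1 2

/-- The `i`-th (signed) submaximal Pfaffian of a `5 × 5` alternating matrix `φ`. -/
def subPfaffian {R : Type} [CommRing R] (φ : Matrix (Fin 5) (Fin 5) R) (i : Fin 5) : R :=
  (-1) ^ (i : ℕ) * pfaffian4 (φ.submatrix i.succAbove i.succAbove)

lemma pf_identity {R : Type} [CommRing R] (M : Matrix (Fin 5) (Fin 5) R)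
    (hsk : ∀ i j, M j i = -M i j) (hd : ∀ i, M i i = 0) (j : Fin 5) :
    ∑ i, subPfaffian M i * M i j = 0 := by
  have h10 := hsk 0 1; have h20 := hsk 0 2; have h30 := hsk 0 3; have h40 := hsk 0 4
  have h21 := hsk 1 2; have h31 := hsk 1 3; have h41 := hsk 1 4
  have h32 := hsk 2 3; have h42 := hsk 2 4; have h43 := hsk 3 4
  have d0 := hd 0; have d1 := hd 1; have d2 := hd 2; have d3 := hd 3; have d4 := hd 4
  have expand : ∀ jj : Fin 5, ∑ i, subPfaffian M i * M i jj =
      subPfaffian M 0 * M 0 jj + subPfaffian M 1 * M 1 jj + subPfaffian M 2 * M 2 jj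
      + subPfaffian M 3 * M 3 jj + subPfaffian M 4 * M 4 jj := fun jj => Fin.sum_univ_five _
  fin_cases j
  · show ∑ i, subPfaffian M i * M i (0:Fin 5) = 0
    rw [expand]
    simp only [subPfaffian, pfaffian4, Matrix.submatrix_apply]
    norm_num [show ((0:Fin 4).succ = (1:Fin 5)) from rfl, show ((1:Fin 4).succ = (2:Fin 5)) from rfl,
      show ((2:Fin 4).succ = (3:Fin 5)) from rfl, show ((3:Fin 4).succ = (4:Fin 5)) from rfl,
      show (((3:Fin 5)):ℕ) = 3 from rfl, show (((4:Fin 5)):ℕ) = 4 from rfl,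
      show ∀ p : Fin 4, (0:Fin 5).succAbove p = p.succ from fun p => rfl,
      show ((1:Fin 5).succAbove 0 = 0) from rfl, show ((1:Fin 5).succAbove 1 = 2) from rfl,
      show ((1:Fin 5).succAbove 2 = 3) from rfl, show ((1:Fin 5).succAbove 3 = 4) from rfl,
      show ((2:Fin 5).succAbove 0 = 0) from rfl, show ((2:Fin 5).succAbove 1 = 1) from rfl,
      show ((2:Fin 5).succAbove 2 = 3) from rfl, show ((2:Fin 5).succAbove 3 = 4) from rfl,
      show ((3:Fin 5).succAbove 0 = 0) from rfl, show ((3:Fin 5).succAbove 1 = 1) from rfl,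
      show ((3:Fin 5).succAbove 2 = 2) from rfl, show ((3:Fin 5).succAbove 3 = 4) from rfl,
      show ((4:Fin 5).succAbove 0 = 0) from rfl, show ((4:Fin 5).succAbove 1 = 1) from rfl,
      show ((4:Fin 5).succAbove 2 = 2) from rfl, show ((4:Fin 5).succAbove 3 = 3) from rfl]
    rw [h10, h20, h30, h40, d0]
    ring
  · show ∑ i, subPfaffian M i * M i (1:Fin 5) = 0
    rw [expand]
    simp only [subPfaffian, pfaffian4, Matrix.submatrix_apply]
    norm_num [show ((0:Fin 4).succ = (1:Fin 5)) from rfl, show ((1:Fin 4).succ = (2:Fin 5)) from rfl,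
      show ((2:Fin 4).succ = (3:Fin 5)) from rfl, show ((3:Fin 4).succ = (4:Fin 5)) from rfl,
      show (((3:Fin 5)):ℕ) = 3 from rfl, show (((4:Fin 5)):ℕ) = 4 from rfl,
      show ∀ p : Fin 4, (0:Fin 5).succAbove p = p.succ from fun p => rfl,
      show ((1:Fin 5).succAbove 0 = 0) from rfl, show ((1:Fin 5).succAbove 1 = 2) from rfl,
      show ((1:Fin 5).succAbove 2 = 3) from rfl, show ((1:Fin 5).succAbove 3 = 4) from rfl,
      show ((2:Fin 5).succAbove 0 = 0) from rfl, show ((2:Fin 5).succAbove 1 = 1) from rfl,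
      show ((2:Fin 5).succAbove 2 = 3) from rfl, show ((2:Fin 5).succAbove 3 = 4) from rfl,
      show ((3:Fin 5).succAbove 0 = 0) from rfl, show ((3:Fin 5).succAbove 1 = 1) from rfl,
      show ((3:Fin 5).succAbove 2 = 2) from rfl, show ((3:Fin 5).succAbove 3 = 4) from rfl,
      show ((4:Fin 5).succAbove 0 = 0) from rfl, show ((4:Fin 5).succAbove 1 = 1) from rfl,
      show ((4:Fin 5).succAbove 2 = 2) from rfl, show ((4:Fin 5).succAbove 3 = 3) from rfl]
    rw [h21, h31, h41, d1]
    ring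
  · show ∑ i, subPfaffian M i * M i (2:Fin 5) = 0
    rw [expand]
    simp only [subPfaffian, pfaffian4, Matrix.submatrix_apply]
    norm_num [show ((0:Fin 4).succ = (1:Fin 5)) from rfl, show ((1:Fin 4).succ = (2:Fin 5)) from rfl,
      show ((2:Fin 4).succ = (3:Fin 5)) from rfl, show ((3:Fin 4).succ = (4:Fin 5)) from rfl,
      show (((3:Fin 5)):ℕ) = 3 from rfl, show (((4:Fin 5)):ℕ) = 4 from rfl,
      show ∀ p : Fin 4, (0:Fin 5).succAbove p = p.succ from fun p => rfl,
      show ((1:Fin 5).succAbove 0 = 0) from rfl, show ((1:Fin 5).succAbove 1 = 2) from rfl,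
      show ((1:Fin 5).succAbove 2 = 3) from rfl, show ((1:Fin 5).succAbove 3 = 4) from rfl,
      show ((2:Fin 5).succAbove 0 = 0) from rfl, show ((2:Fin 5).succAbove 1 = 1) from rfl,
      show ((2:Fin 5).succAbove 2 = 3) from rfl, show ((2:Fin 5).succAbove 3 = 4) from rfl,
      show ((3:Fin 5).succAbove 0 = 0) from rfl, show ((3:Fin 5).succAbove 1 = 1) from rfl,
      show ((3:Fin 5).succAbove 2 = 2) from rfl, show ((3:Fin 5).succAbove 3 = 4) from rfl,
      show ((4:Fin 5).succAbove 0 = 0) from rfl, show ((4:Fin 5).succAbove 1 = 1) from rfl,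
      show ((4:Fin 5).succAbove 2 = 2) from rfl, show ((4:Fin 5).succAbove 3 = 3) from rfl]
    rw [h32, h42, d2]
    ring
  · show ∑ i, subPfaffian M i * M i (3:Fin 5) = 0
    rw [expand]
    simp only [subPfaffian, pfaffian4, Matrix.submatrix_apply]
    norm_num [show ((0:Fin 4).succ = (1:Fin 5)) from rfl, show ((1:Fin 4).succ = (2:Fin 5)) from rfl,
      show ((2:Fin 4).succ = (3:Fin 5)) from rfl, show ((3:Fin 4).succ = (4:Fin 5)) from rfl,
      show (((3:Fin 5)):ℕ) = 3 from rfl, show (((4:Fin 5)):ℕ) = 4 from rfl,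
      show ∀ p : Fin 4, (0:Fin 5).succAbove p = p.succ from fun p => rfl,
      show ((1:Fin 5).succAbove 0 = 0) from rfl, show ((1:Fin 5).succAbove 1 = 2) from rfl,
      show ((1:Fin 5).succAbove 2 = 3) from rfl, show ((1:Fin 5).succAbove 3 = 4) from rfl,
      show ((2:Fin 5).succAbove 0 = 0) from rfl, show ((2:Fin 5).succAbove 1 = 1) from rfl,
      show ((2:Fin 5).succAbove 2 = 3) from rfl, show ((2:Fin 5).succAbove 3 = 4) from rfl,
      show ((3:Fin 5).succAbove 0 = 0) from rfl, show ((3:Fin 5).succAbove 1 = 1) from rfl,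
      show ((3:Fin 5).succAbove 2 = 2) from rfl, show ((3:Fin 5).succAbove 3 = 4) from rfl,
      show ((4:Fin 5).succAbove 0 = 0) from rfl, show ((4:Fin 5).succAbove 1 = 1) from rfl,
      show ((4:Fin 5).succAbove 2 = 2) from rfl, show ((4:Fin 5).succAbove 3 = 3) from rfl]
    rw [h43, d3]
    ring
  · show ∑ i, subPfaffian M i * M i (4:Fin 5) = 0
    rw [expand]
    simp only [subPfaffian, pfaffian4, Matrix.submatrix_apply]
    norm_num [show ((0:Fin 4).succ = (1:Fin 5)) from rfl, show ((1:Fin 4).succ = (2:Fin 5)) from rfl,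
      show ((2:Fin 4).succ = (3:Fin 5)) from rfl, show ((3:Fin 4).succ = (4:Fin 5)) from rfl,
      show (((3:Fin 5)):ℕ) = 3 from rfl, show (((4:Fin 5)):ℕ) = 4 from rfl,
      show ∀ p : Fin 4, (0:Fin 5).succAbove p = p.succ from fun p => rfl,
      show ((1:Fin 5).succAbove 0 = 0) from rfl, show ((1:Fin 5).succAbove 1 = 2) from rfl,
      show ((1:Fin 5).succAbove 2 = 3) from rfl, show ((1:Fin 5).succAbove 3 = 4) from rfl,
      show ((2:Fin 5).succAbove 0 = 0) from rfl, show ((2:Fin 5).succAbove 1 = 1) from rfl,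
      show ((2:Fin 5).succAbove 2 = 3) from rfl, show ((2:Fin 5).succAbove 3 = 4) from rfl,
      show ((3:Fin 5).succAbove 0 = 0) from rfl, show ((3:Fin 5).succAbove 1 = 1) from rfl,
      show ((3:Fin 5).succAbove 2 = 2) from rfl, show ((3:Fin 5).succAbove 3 = 4) from rfl,
      show ((4:Fin 5).succAbove 0 = 0) from rfl, show ((4:Fin 5).succAbove 1 = 1) from rfl,
      show ((4:Fin 5).succAbove 2 = 2) from rfl, show ((4:Fin 5).succAbove 3 = 3) from rfl]
    rw [d4]
    ring

lemma pf4_sq {R : Type} [CommRing R] (N : Matrix (Fin 4) (Fin 4) R)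
    (hsk : ∀ i j, N j i = -N i j) (hd : ∀ i, N i i = 0) :
    pfaffian4 N ^ 2 = N.det := by
  have h10 := hsk 0 1; have h20 := hsk 0 2; have h30 := hsk 0 3
  have h21 := hsk 1 2; have h31 := hsk 1 3; have h32 := hsk 2 3
  have d0 := hd 0; have d1 := hd 1; have d2 := hd 2; have d3 := hd 3
  simp [Matrix.det_succ_row_zero, Fin.sum_univ_succ, pfaffian4,
    show ((2:Fin 3).succ = (3:Fin 4)) from rfl, show ((1:Fin 3).succ = (2:Fin 4)) from rfl,
    show (Fin.castSucc (2:Fin 3) = (2:Fin 4)) from rfl,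
    show ((1:Fin 4).succAbove 2 = 3) from rfl, show ((2:Fin 4).succAbove 2 = 3) from rfl, show ((3:Fin 4).succAbove 2 = 2) from rfl,
    h10, h20, h30, h21, h31, h32, d0, d1, d2, d3]
  ring

/-- A homogeneous polynomial of degree 1 divisible by a homogeneous polynomial of
degree 2 is zero. -/
lemma homog_dvd_eq_zero {K : Type} [Field K] {q v : MvPolynomial (Fin 4) K}
    (hq : q.IsHomogeneous 2) (hv : v.IsHomogeneous 1) (hdvd : q ∣ v) : v = 0 := by
  obtain ⟨w, rfl⟩ := hdvd
  have h1 : MvPolynomial.homogeneousComponent 1 (q * w) = q * w := by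
    rw [MvPolynomial.homogeneousComponent_of_mem
      ((MvPolynomial.mem_homogeneousSubmodule _ _).mpr hv), if_pos rfl]
  have expand : q * w =
      ∑ i ∈ Finset.range (w.totalDegree + 1), q * MvPolynomial.homogeneousComponent i w := by
    rw [← Finset.mul_sum, MvPolynomial.sum_homogeneousComponent]
  calc q * w = MvPolynomial.homogeneousComponent 1 (q * w) := h1.symm
    _ = ∑ i ∈ Finset.range (w.totalDegree + 1),
        MvPolynomial.homogeneousComponent 1 (q * MvPolynomial.homogeneousComponent i w) := by
        conv_lhs => rw [expand]
        rw [map_sum]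
    _ = 0 := Finset.sum_eq_zero fun i _ => by
        rw [MvPolynomial.homogeneousComponent_of_mem
          ((MvPolynomial.mem_homogeneousSubmodule _ _).mpr
            (hq.mul (MvPolynomial.homogeneousComponent_isHomogeneous i w))), if_neg (by omega)]

section main
variable {K : Type} [Field K]
open MvPolynomial

theorem main_skeleton
    (q₁ q₂ : MvPolynomial (Fin 4) K)
    (hq₁ : q₁.IsHomogeneous 2) (hq₂ : q₂.IsHomogeneous 2)
    (hind : LinearIndependent K ![q₁, q₂])
    (hcop : IsRelPrime q₁ q₂)
    (φ : Matrix (Fin 5) (Fin 5) (MvPolynomial (Fin 4) K))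
    (hlin : ∀ i j, (φ i j).IsHomogeneous 1)
    (hskew : ∀ i j, φ j i = -φ i j)
    (hspan : Submodule.span K (Set.range (subPfaffian φ)) =
      Submodule.span K {q₁, q₂}) :
    False := by
  -- the matrix with the diagonal forced to zero
  set M : Matrix (Fin 5) (Fin 5) (MvPolynomial (Fin 4) K) := fun i j => if i = j then 0 else φ i j with hM
  have hMoff : ∀ i j : Fin 5, i ≠ j → M i j = φ i j := fun i j h => if_neg h
  have hsk : ∀ i j, M j i = -M i j := by
    intro i j
    by_cases h : i = j
    · subst h; simp [hM]
    · rw [hMoff j i (Ne.symm h), hMoff i j h, hskew]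
  have hd : ∀ i, M i i = 0 := fun i => if_pos rfl
  have hMhom : ∀ i j, (M i j).IsHomogeneous 1 := by
    intro i j
    by_cases h : i = j
    · subst h; rw [hd]; exact isHomogeneous_zero _ _ _
    · rw [hMoff i j h]; exact hlin i j
  -- the sub-Pfaffians of φ and M agree
  have hpf : ∀ k : Fin 5, subPfaffian φ k = subPfaffian M k := by
    intro k
    have hne : ∀ p q : Fin 4, p ≠ q →
        M (k.succAbove p) (k.succAbove q) = φ (k.succAbove p) (k.succAbove q) :=
      fun p q hpq => hMoff _ _ (fun h => hpq (Fin.succAbove_right_injective h))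
    simp only [subPfaffian, pfaffian4, Matrix.submatrix_apply]
    rw [hne 0 1 (by decide), hne 2 3 (by decide), hne 0 2 (by decide), hne 1 3 (by decide),
      hne 0 3 (by decide), hne 1 2 (by decide)]
  -- the key Pfaffian identity (proved below as `pf_identity`)
  have key : ∀ j, ∑ i, subPfaffian φ i * M i j = 0 := by
    intro j
    rw [Finset.sum_congr rfl fun i _ => by rw [hpf i]]
    exact pf_identity M hsk hd j
  -- each sub-Pfaffian lies in the span of q₁, q₂
  have hmem : ∀ i, subPfaffian φ i ∈ Submodule.span K ({q₁, q₂} : Set (MvPolynomial (Fin 4) K)) := by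
    intro i
    rw [← hspan]
    exact Submodule.subset_span ⟨i, rfl⟩
  choose a b hab using fun i => Submodule.mem_span_pair.mp (hmem i)
  -- the two linear relations on the rows of M
  have hrel : ∀ j, q₁ * (∑ i, C (a i) * M i j) + q₂ * (∑ i, C (b i) * M i j) = 0 := by
    intro j
    calc q₁ * (∑ i, C (a i) * M i j) + q₂ * (∑ i, C (b i) * M i j)
        = ∑ i, (a i • q₁ + b i • q₂) * M i j := by
          rw [Finset.mul_sum, Finset.mul_sum, ← Finset.sum_add_distrib]
          refine Finset.sum_congr rfl fun i _ => ?_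
          rw [smul_eq_C_mul, smul_eq_C_mul]; ring
      _ = ∑ i, subPfaffian φ i * M i j :=
          Finset.sum_congr rfl fun i _ => by rw [hab i]
      _ = 0 := key j
  have hq₁0 : q₁ ≠ 0 := by
    have := hind.ne_zero 0
    simpa using this
  -- homogeneity of the combination
  have husum : ∀ (c : Fin 5 → K) (j : Fin 5),
      (∑ i, C (c i) * M i j : MvPolynomial (Fin 4) K).IsHomogeneous 1 := by
    intro c j
    refine IsHomogeneous.sum _ _ _ fun i _ => ?_
    simpa using (isHomogeneous_C (Fin 4) (c i)).mul (hMhom i j)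
  -- both relations vanish identically
  have hzero : ∀ (α β : K) (j : Fin 5),
      (∑ i, C (α * a i + β * b i) * M i j : MvPolynomial (Fin 4) K) = 0 := by
    intro α β j
    have hu : q₁ * (C α * ∑ i, C (a i) * M i j + C β * ∑ i, C (b i) * M i j)
        = q₁ * C α * (∑ i, C (a i) * M i j) + q₁ * C β * (∑ i, C (b i) * M i j) := by ring
    -- first show the b-relation vanishes, then the a-relation
    have hvz : (∑ i, C (b i) * M i j : MvPolynomial (Fin 4) K) = 0 := by
      have hdvd : q₁ ∣ q₂ * ∑ i, C (b i) * M i j :=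
        ⟨-(∑ i, C (a i) * M i j), by linear_combination hrel j⟩
      exact homog_dvd_eq_zero hq₁ (husum b j) (hcop.dvd_of_dvd_mul_left hdvd)
    have huz : (∑ i, C (a i) * M i j : MvPolynomial (Fin 4) K) = 0 := by
      have h0 : q₁ * (∑ i, C (a i) * M i j) = 0 := by
        have := hrel j; rw [hvz, mul_zero, add_zero] at this; exact this
      exact (mul_eq_zero.mp h0).resolve_left hq₁0
    calc (∑ i, C (α * a i + β * b i) * M i j : MvPolynomial (Fin 4) K)
        = C α * (∑ i, C (a i) * M i j) + C β * (∑ i, C (b i) * M i j) := by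
          rw [Finset.mul_sum, Finset.mul_sum, ← Finset.sum_add_distrib]
          refine Finset.sum_congr rfl fun i _ => ?_
          rw [map_add, map_mul, map_mul]; ring
      _ = 0 := by rw [huz, hvz, mul_zero, mul_zero, add_zero]
  -- biorthogonality: there are dual functionals
  have hpair : ∀ s t : K, s • q₁ + t • q₂ = 0 → s = 0 ∧ t = 0 :=
    LinearIndependent.pair_iff.mp hind
  have hdual : ∀ x : MvPolynomial (Fin 4) K, x ∈ Submodule.span K ({q₁, q₂} : Set (MvPolynomial (Fin 4) K)) →
      ∃ lam : Fin 5 → K, (∑ i, lam i * a i) • q₁ + (∑ i, lam i * b i) • q₂ = x := by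
    intro x hx
    rw [← hspan] at hx
    obtain ⟨lam, hlam⟩ := (Submodule.mem_span_range_iff_exists_fun K).mp hx
    refine ⟨lam, ?_⟩
    calc (∑ i, lam i * a i) • q₁ + (∑ i, lam i * b i) • q₂
        = ∑ i, lam i • (a i • q₁ + b i • q₂) := by
          rw [Finset.sum_smul, Finset.sum_smul, ← Finset.sum_add_distrib]
          refine Finset.sum_congr rfl fun i _ => ?_
          rw [smul_add, smul_smul, smul_smul]
      _ = x := by rw [← hlam]; exact Finset.sum_congr rfl fun i _ => by rw [hab i]
  obtain ⟨lam, hlam⟩ := hdual q₁ (Submodule.subset_span (by simp))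
  obtain ⟨mu, hmu⟩ := hdual q₂ (Submodule.subset_span (by simp))
  have hlam1 : ∑ i, lam i * a i = 1 ∧ ∑ i, lam i * b i = 0 := by
    have h := hpair (∑ i, lam i * a i - 1) (∑ i, lam i * b i)
      (by rw [sub_smul, one_smul, sub_add_eq_add_sub, hlam, sub_self])
    exact ⟨sub_eq_zero.mp h.1, h.2⟩
  have hmu1 : ∑ i, mu i * a i = 0 ∧ ∑ i, mu i * b i = 1 := by
    have h := hpair (∑ i, mu i * a i) (∑ i, mu i * b i - 1)
      (by rw [sub_smul, one_smul, add_sub_assoc', hmu, sub_self])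
    exact ⟨h.1, sub_eq_zero.mp h.2⟩
  -- every sub-Pfaffian vanishes
  have hPzero : ∀ k : Fin 5, subPfaffian φ k = 0 := by
    intro k
    -- produce a nonzero constant row relation vanishing at k
    obtain ⟨c, hcne, hck, hcrel⟩ : ∃ c : Fin 5 → K,
        (∃ m, c m ≠ 0) ∧ c k = 0 ∧ ∀ j, (∑ i, C (c i) * M i j : MvPolynomial (Fin 4) K) = 0 := by
      by_cases hk : a k = 0 ∧ b k = 0
      · refine ⟨a, ?_, hk.1, ?_⟩
        · by_contra hc
          push_neg at hc
          have : (∑ i, lam i * a i) = 0 := Finset.sum_eq_zero fun i _ => by rw [hc i, mul_zero]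
          rw [hlam1.1] at this; exact one_ne_zero this
        · intro j
          have := hzero 1 0 j
          simpa using this
      · refine ⟨fun i => b k * a i - a k * b i, ?_, by ring, ?_⟩
        · by_contra hc
          push_neg at hc
          have hb : b k = b k * (∑ i, lam i * a i) - a k * (∑ i, lam i * b i) := by
            rw [hlam1.1, hlam1.2]; ring
          have ha : a k = -(b k * (∑ i, mu i * a i) - a k * (∑ i, mu i * b i)) := by
            rw [hmu1.1, hmu1.2]; ring
          rw [Finset.mul_sum, Finset.mul_sum, ← Finset.sum_sub_distrib] at hb ha
          simp only [show ∀ i, b k * (lam i * a i) - a k * (lam i * b i)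
              = lam i * (b k * a i - a k * b i) from fun i => by ring] at hb
          simp only [show ∀ i, b k * (mu i * a i) - a k * (mu i * b i)
              = mu i * (b k * a i - a k * b i) from fun i => by ring] at ha
          rw [Finset.sum_congr rfl fun i _ => by rw [hc i, mul_zero]] at hb ha
          simp at hb ha
          exact hk ⟨ha, hb⟩
        · intro j
          have := hzero (b k) (-(a k)) j
          simpa [sub_eq_add_neg, mul_comm] using this
    -- the corresponding submatrix is singular
    have hdet : (M.submatrix k.succAbove k.succAbove).det = 0 := by
      rw [← Matrix.exists_vecMul_eq_zero_iff]
      refine ⟨fun p => C (c (k.succAbove p)), ?_, ?_⟩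
      · obtain ⟨m, hm⟩ := hcne
        have hmk : m ≠ k := fun h => hm (h ▸ hck)
        obtain ⟨p, hp⟩ := Fin.exists_succAbove_eq hmk
        intro h
        have := congrFun h p
        rw [hp] at this
        exact hm (by simpa using this)
      · funext j
        have h5 := hcrel (k.succAbove j)
        rw [Fin.sum_univ_succAbove (fun i => C (c i) * M i (k.succAbove j)) k] at h5
        rw [hck] at h5
        simp only [map_zero, zero_mul, zero_add] at h5
        simpa [Matrix.vecMul, dotProduct, Matrix.submatrix_apply] using h5
    have hpfsq : pfaffian4 (M.submatrix k.succAbove k.succAbove) ^ 2 = 0 := by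
      rw [pf4_sq (M.submatrix k.succAbove k.succAbove)
        (fun p q => hsk (k.succAbove p) (k.succAbove q))
        (fun p => hd (k.succAbove p)), hdet]
    have : pfaffian4 (M.submatrix k.succAbove k.succAbove) = 0 :=
      (pow_eq_zero_iff two_ne_zero).mp hpfsq
    rw [hpf k]
    simp [subPfaffian, this]
  -- contradiction with the span being two-dimensional
  have : q₁ ∈ Submodule.span K (Set.range (subPfaffian φ)) := by
    rw [hspan]; exact Submodule.subset_span (by simp)
  obtain ⟨lam', hlam'⟩ := (Submodule.mem_span_range_iff_exists_fun K).mp this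
  apply hq₁0
  rw [← hlam']
  exact Finset.sum_eq_zero fun i _ => by rw [hPzero i, smul_zero]

end main

/-- Let `C ⊂ ℙ³` over an algebraically closed field be a curve defined by two
coprime quadrics `q₁, q₂` forming a complete intersection.  Then `C` cannot be the common zero
locus of the five `4 × 4` Pfaffians of a `5 × 5` alternating matrix `φ` of linear forms on `ℙ³`
whose Pfaffians span the space `⟨q₁, q₂⟩`: no such matrix `φ` exists. -/
theorem no_pfaffian_presentation_in_P3
    {K : Type} [Field K] [IsAlgClosed K]
    (q₁ q₂ : MvPolynomial (Fin 4) K)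
    (hq₁ : q₁.IsHomogeneous 2) (hq₂ : q₂.IsHomogeneous 2)
    (hind : LinearIndependent K ![q₁, q₂])
    (hcop : IsRelPrime q₁ q₂)
    (φ : Matrix (Fin 5) (Fin 5) (MvPolynomial (Fin 4) K))
    (hlin : ∀ i j, (φ i j).IsHomogeneous 1)
    (hskew : ∀ i j, φ j i = -φ i j)
    (hspan : Submodule.span K (Set.range (subPfaffian φ)) =
      Submodule.span K {q₁, q₂}) :
    False :=
  main_skeleton q₁ q₂ hq₁ hq₂ hind hcop φ hlin hskew hspan
end

section
/- Let R = K[x₁,…,x₅] and let φ be a 5×5 alternating matrix of linear forms with submaximal Pfaffians p₁,…,p₅. Suppose the Jacobian matrix (∂p_i/∂x_j) has nonzero determinant (as a polynomial). Then the quartics {p_i p_j : 1 ≤ i ≤ j ≤ 5} are linearly independent over K. -/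
/-!
Differentiating a relation `∑ d i j • (p i * p j) = 0` along `x_t` gives
`∑ k, (∑ i, (d k i + d i k) • p i) * ∂ₜ p k = 0` for every `t`. As the Jacobian matrix of `p` is
nonsingular, every `∑ i, (d k i + d i k) • p i` vanishes; the same argument applied to a linear
relation shows that the `p i` are linearly independent, so `d` is skew-symmetric. When `2 ≠ 0`, a
skew-symmetric `d` supported on `i ≤ j` is zero.
-/

namespace MvPolynomial

variable {σ R : Type*} [Fintype σ]

noncomputable def jacobianMatrix [CommSemiring R] (p : σ → MvPolynomial σ R) :
    Matrix σ σ (MvPolynomial σ R) :=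
  Matrix.of fun i j => pderiv j (p i)

theorem pderiv_sum_smul_mul [CommSemiring R] (p : σ → MvPolynomial σ R) (d : σ → σ → R) (t : σ) :
    pderiv t (∑ i, ∑ j, d i j • (p i * p j)) =
      ∑ k, (∑ i, (d k i + d i k) • p i) * pderiv t (p k) := by
  simp only [map_sum, Derivation.map_smul, pderiv_mul, smul_add, Finset.sum_add_distrib, add_smul,
    add_mul, Finset.sum_mul, smul_mul_assoc, mul_comm (pderiv t _)]
  rw [Finset.sum_comm (f := fun i j => d i j • (p i * pderiv t (p j)))]

variable [DecidableEq σ] [CommRing R] [IsDomain R] {p : σ → MvPolynomial σ R}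

theorem eq_zero_of_sum_mul_pderiv_eq_zero (hp : (jacobianMatrix p).det ≠ 0)
    {v : σ → MvPolynomial σ R} (hv : ∀ t, ∑ k, v k * pderiv t (p k) = 0) : v = 0 :=
  Matrix.eq_zero_of_vecMul_eq_zero hp (_root_.funext hv)

theorem linearIndependent_of_det_jacobianMatrix_ne_zero (hp : (jacobianMatrix p).det ≠ 0) :
    LinearIndependent R p := by
  rw [Fintype.linearIndependent_iff]
  intro c hc
  have hC : (fun i => C (c i)) = 0 := eq_zero_of_sum_mul_pderiv_eq_zero hp fun t => by
    simpa [Derivation.map_smul, smul_eq_C_mul] using congrArg (pderiv t) hc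
  exact fun i => C_eq_zero.mp (congrFun hC i)

theorem add_swap_eq_zero_of_sum_smul_mul_eq_zero (hp : (jacobianMatrix p).det ≠ 0)
    {d : σ → σ → R} (hd : ∑ i, ∑ j, d i j • (p i * p j) = 0) (i j : σ) : d i j + d j i = 0 := by
  have hpolar : (fun k => ∑ i, (d k i + d i k) • p i) = 0 :=
    eq_zero_of_sum_mul_pderiv_eq_zero hp fun t => by rw [← pderiv_sum_smul_mul, hd, map_zero]
  exact Fintype.linearIndependent_iff.mp (linearIndependent_of_det_jacobianMatrix_ne_zero hp) _
    (congrFun hpolar i) j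

end MvPolynomial

theorem linearIndependent_of_forall_add_swap_eq_zero {ι K M : Type*} [Fintype ι] [LinearOrder ι]
    [Ring K] [NoZeroDivisors K] [AddCommGroup M] [Module K M] (h2 : (2 : K) ≠ 0)
    {f : ι → ι → M} (hf : ∀ d : ι → ι → K, ∑ i, ∑ j, d i j • f i j = 0 → ∀ i j, d i j + d j i = 0) :
    LinearIndependent K (fun s : {ij : ι × ι // ij.1 ≤ ij.2} => f s.1.1 s.1.2) := by
  rw [Fintype.linearIndependent_iff]
  intro g hg s
  set d : ι → ι → K := fun i j => if h : i ≤ j then g ⟨(i, j), h⟩ else 0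
  have hsum : ∑ i, ∑ j, d i j • f i j = 0 := by
    rw [← hg, ← Fintype.sum_prod_type',
      ← Fintype.sum_subtype_add_sum_subtype (fun ij : ι × ι => ij.1 ≤ ij.2)]
    have hlower : ∑ s : {ij : ι × ι // ¬ij.1 ≤ ij.2}, d s.1.1 s.1.2 • f s.1.1 s.1.2 = 0 :=
      Fintype.sum_eq_zero _ fun s => by simp only [d, dif_neg s.2, zero_smul]
    rw [hlower, add_zero]
    exact Finset.sum_congr rfl fun s _ => by simp only [d, dif_pos s.2]
  obtain ⟨⟨i, j⟩, hij : i ≤ j⟩ := s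
  have hdij : d i j = g ⟨(i, j), hij⟩ := dif_pos hij
  rw [← hdij]
  rcases hij.eq_or_lt with rfl | hlt
  · have h := hf d hsum i i
    rw [← two_mul] at h
    exact (mul_eq_zero.mp h).resolve_left h2
  · have hdji : d j i = 0 := dif_neg hlt.not_ge
    simpa [hdji] using hf d hsum i j

theorem products_of_pfaffians_linearly_independent_general
    {K : Type} [Field K] (h2 : (2 : K) ≠ 0)
    (φ : Matrix (Fin 5) (Fin 5) (MvPolynomial (Fin 5) K))
    (hjac : (Matrix.of fun i j : Fin 5 =>
      MvPolynomial.pderiv j (subPfaffian φ i)).det ≠ 0) :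
    LinearIndependent K (fun s : {ij : Fin 5 × Fin 5 // ij.1 ≤ ij.2} =>
      subPfaffian φ s.val.1 * subPfaffian φ s.val.2) :=
  linearIndependent_of_forall_add_swap_eq_zero (f := fun i j => subPfaffian φ i * subPfaffian φ j)
    h2 fun _ hd => MvPolynomial.add_swap_eq_zero_of_sum_smul_mul_eq_zero (p := subPfaffian φ) hjac hd

/-- Let `R = K[x₁, …, x₅]` and let `φ` be a `5 × 5` alternating matrix of
linear forms with submaximal Pfaffians `p₁, …, p₅`.  Suppose the Jacobian matrix `(∂p_i/∂x_j)`
has nonzero determinant.  Then the quartics `{p_i p_j : 1 ≤ i ≤ j ≤ 5}` are linearly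
independent over `K`. -/
theorem products_of_pfaffians_linearly_independent
    {K : Type} [Field K] (h2 : (2 : K) ≠ 0)
    (φ : Matrix (Fin 5) (Fin 5) (MvPolynomial (Fin 5) K))
    (hlin : ∀ i j, (φ i j).IsHomogeneous 1)
    (hskew : ∀ i j, φ j i = -φ i j)
    (hjac : (Matrix.of fun i j : Fin 5 =>
      MvPolynomial.pderiv j (subPfaffian φ i)).det ≠ 0) :
    LinearIndependent K (fun s : {ij : Fin 5 × Fin 5 // ij.1 ≤ ij.2} =>
      subPfaffian φ s.val.1 * subPfaffian φ s.val.2) :=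
  products_of_pfaffians_linearly_independent_general h2 φ hjac
end
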